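/- Let U be the bilateral shift of multiplicity n on L²(𝕋, ℂⁿ). Every closed subspace M of L²(𝕋, ℂⁿ) invariant under U admits a unique decomposition M = M₁ ⊕ M₂ as an orthogonal direct sum, where M₁ is a reducing subspace for U (U M₁ ⊆ M₁ and U* M₁ ⊆ M₁), M₂ is a closed subspace invariant under U, and ⋂_{i∈ℕ} Uⁱ M₂ = {0}. -/

import Mathlib

open MeasureTheory Complex ContinuousLinearMap
open scoped ComplexConjugate ENNReal NNReal

noncomputable section

/-! Basic setup: the unit circle `𝕋 = Circle ⊆ ℂ` with its Borel σ-algebra and its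
normalized arc-length (Haar) probability measure `μc`; the spaces `L²(𝕋, ℂⁿ)` and the
Hardy spaces `H²(ℂⁿ)`; shifts, matrix- (i.e. operator-) valued functions on the circle,
their Fourier coefficients, inner functions and analytic extensions into the unit disk. -/

instance : MeasurableSpace Circle := borel Circle
instance : BorelSpace Circle := ⟨rfl⟩
instance : Fact (0 < 2 * Real.pi) := ⟨by positivity⟩

/-- The normalized arc-length (Haar) probability measure on the unit circle `𝕋`. -/
def μc : Measure Circle :=
  Measure.map AddCircle.homeomorphCircle' AddCircle.haarAddCircle

/-- `ℂⁿ` as a (finite dimensional) Hilbert space. -/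
abbrev Cn (n : ℕ) := EuclideanSpace ℂ (Fin n)

/-- `L²(𝕋, ℂⁿ)`. -/
abbrev L2 (n : ℕ) := Lp (Cn n) 2 μc

/-- The `k`-th Fourier coefficient `f̂(k) = ∫_𝕋 f(z) z̄ᵏ dμ` of a `ℂⁿ`-valued function. -/
def fc {n : ℕ} (f : Circle → Cn n) (k : ℤ) : Cn n :=
  ∫ z, ((starRingEnd ℂ) (z : ℂ)) ^ k • f z ∂μc

/-- The Hardy space `H²(ℂⁿ)`, as a subset of `L²(𝕋, ℂⁿ)`: those `f` whose Fourier
coefficients `f̂(k)` vanish for all `k < 0`. -/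
def H2 (n : ℕ) : Set (L2 n) :=
  {f | ∀ k : ℤ, k < 0 → fc (f : Circle → Cn n) k = 0}

/-- A set `M ⊆ L²(𝕋, ℂⁿ)` is invariant under the shift `U` (multiplication by the
coordinate function `z`): for every `f ∈ M`, the element `U f` (i.e. the element of `L²`
represented by `z ↦ z • f(z)`) again belongs to `M`. -/
def ShiftInv {n : ℕ} (M : Set (L2 n)) : Prop :=
  ∀ f ∈ M, ∃ g ∈ M, (g : Circle → Cn n) =ᵐ[μc] fun z => (z : ℂ) • (f : Circle → Cn n) z

/-- Invariance of `M ⊆ L²(𝕋, ℂⁿ)` under the adjoint `U*` of the bilateral shift,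
i.e. multiplication by `z̄`. -/
def ShiftStarInv {n : ℕ} (M : Set (L2 n)) : Prop :=
  ∀ f ∈ M, ∃ g ∈ M,
    (g : Circle → Cn n) =ᵐ[μc] fun z => ((starRingEnd ℂ) (z : ℂ)) • (f : Circle → Cn n) z

/-- The image `U M` of a set `M ⊆ L²(𝕋, ℂⁿ)` under the shift (multiplication by `z`). -/
def Sset {n : ℕ} (M : Set (L2 n)) : Set (L2 n) :=
  {g | ∃ f ∈ M, (g : Circle → Cn n) =ᵐ[μc] fun z => (z : ℂ) • (f : Circle → Cn n) z}

/-- The image `Uᵏ M` of a set `M ⊆ L²(𝕋, ℂⁿ)` under the `k`-th power of the shift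
(multiplication by `zᵏ`). -/
def shiftPow {n : ℕ} (k : ℕ) (M : Set (L2 n)) : Set (L2 n) :=
  {g | ∃ f ∈ M, (g : Circle → Cn n) =ᵐ[μc] fun z => ((z : ℂ) ^ k) • (f : Circle → Cn n) z}

/-- Multiplication of a set `A ⊆ L²(𝕋, ℂᵐ)` by a matrix- (operator-) valued function `G`
on the circle: `G·A = {G·f : f ∈ A}` inside `L²(𝕋, ℂⁿ)`. -/
def mulSet {m n : ℕ} (G : Circle → (Cn m →L[ℂ] Cn n)) (A : Set (L2 m)) : Set (L2 n) :=
  {h | ∃ f ∈ A, (h : Circle → Cn n) =ᵐ[μc] fun z => G z ((f : Circle → Cn m) z)}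

/-- The `k`-th matrix Fourier coefficient `Ĝ(k) = ∫_𝕋 G(z) z̄ᵏ dμ` of a matrix-valued
function on the circle. -/
def fcM {m n : ℕ} (G : Circle → (Cn m →L[ℂ] Cn n)) (k : ℤ) : Cn m →L[ℂ] Cn n :=
  ∫ z, ((starRingEnd ℂ) (z : ℂ)) ^ k • G z ∂μc

/-- An inner function from `ℂᵐ` to `ℂⁿ`: a measurable, essentially bounded, matrix-valued
function `G` on `𝕋` with `G(z)*G(z) = Iₘ` for a.e. `z` and all negative matrix Fourier
coefficients vanishing. -/
def IsInner {m n : ℕ} (G : Circle → (Cn m →L[ℂ] Cn n)) : Prop :=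
  Measurable G ∧ (∃ C : ℝ, ∀ᵐ z ∂μc, ‖G z‖ ≤ C) ∧
    (∀ᵐ z ∂μc, (ContinuousLinearMap.adjoint (G z)).comp (G z) = ContinuousLinearMap.id ℂ (Cn m)) ∧
    (∀ k : ℤ, k < 0 → fcM G k = 0)

/-- The analytic extension `G(λ) = Σ_{k ≥ 0} Ĝ(k) λᵏ` of a matrix-valued function on the
circle to a point `λ` of the open unit disk. -/
def ext {m n : ℕ} (G : Circle → (Cn m →L[ℂ] Cn n)) (lam : ℂ) : Cn m →L[ℂ] Cn n :=
  ∑' k : ℕ, lam ^ k • fcM G (k : ℤ)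

/-- The analytic extension `h(λ) = Σ_{k ≥ 0} ĥ(k) λᵏ` of a vector-valued function on the
circle to a point `λ` of the open unit disk. -/
def extV {n : ℕ} (h : Circle → Cn n) (lam : ℂ) : Cn n :=
  ∑' k : ℕ, lam ^ k • fc h (k : ℤ)

/-- The orthogonal projection of `ℂⁿ` onto a subspace `N`, as an endomorphism of `ℂⁿ`. -/
def projOn {n : ℕ} (N : Submodule ℂ (Cn n)) : Cn n →L[ℂ] Cn n :=
  N.subtypeL.comp (N.orthogonalProjectionOnto)

/-- A bounded operator `p` on a Hilbert space is an orthogonal projection iff it is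
idempotent and self-adjoint. -/
def IsOrthoProj {E : Type*} [NormedAddCommGroup E] [InnerProductSpace ℂ E] [CompleteSpace E]
    (p : E →L[ℂ] E) : Prop :=
  p.comp p = p ∧ ContinuousLinearMap.adjoint p = p

/-- `H²(N)` for a subspace `N ⊆ ℂⁿ`: those `f ∈ H²(ℂⁿ)` with `f(z) ∈ N` for a.e. `z`. -/
def H2N {n : ℕ} (N : Submodule ℂ (Cn n)) : Set (L2 n) :=
  {f | f ∈ H2 n ∧ ∀ᵐ z ∂μc, (f : Circle → Cn n) z ∈ N}


/-! The decomposition exists for any unitary `U` on a Hilbert space and any closed `U`-invariant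
subspace `M`. Put `M₁ = ⋂ᵢ Uⁱ M` and `M₂ = M ⊖ M₁`. Then `M₁` is closed and both `U` and `U⁻¹`
map it into itself, so `U` maps `M₁ᗮ`, and hence `M₂`, into itself, and
`⋂ᵢ Uⁱ M₂ ⊆ M₂ ∩ M₁ = 0`. For uniqueness, take another such decomposition `M = N₁ ⊕ N₂`. Since
`U⁻¹ N₁ ⊆ N₁ ⊆ M`, we get `N₁ ⊆ M₁`. Also `Uⁱ M ⊆ N₁ + Uⁱ N₂` and `Uⁱ N₂ ⊆ N₂`, so the modular
law gives `M₁ ∩ N₂ ⊆ ⋂ᵢ Uⁱ N₂ = 0`, and therefore `M₁ = N₁ + (M₁ ∩ N₂) = N₁`. The bilateral shift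
is multiplication by the unimodular function `z`, which is a unitary operator on `L²`. -/

open Set

theorem Submodule.coe_sup_eq_setOf {R E : Type*} [Semiring R] [AddCommMonoid E] [Module R E]
    (p q : Submodule R E) :
    ((p ⊔ q : Submodule R E) : Set E) = {v | ∃ x ∈ p, ∃ y ∈ q, v = x + y} := by
  ext v
  simp only [SetLike.mem_coe, Submodule.mem_sup, Set.mem_ofPred_eq, eq_comm]

theorem RCLike.conj_mul_of_norm_eq_one {𝕜 : Type*} [RCLike 𝕜] {z : 𝕜} (hz : ‖z‖ = 1) :
    conj z * z = 1 := by
  rw [RCLike.conj_mul, hz, RCLike.ofReal_one, one_pow]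

section InnerProductSpace

variable {𝕜 E : Type*} [RCLike 𝕜] [NormedAddCommGroup E] [InnerProductSpace 𝕜 E]

theorem Submodule.IsOrtho.sup_inf_orthogonal {N₁ N₂ : Submodule 𝕜 E} (h : N₁ ⟂ N₂) :
    (N₁ ⊔ N₂) ⊓ N₁ᗮ = N₂ := by
  rw [sup_comm, sup_inf_assoc_of_le _ (Submodule.isOrtho_iff_le.1 h.symm),
    Submodule.inf_orthogonal_eq_bot, sup_bot_eq]

namespace LinearIsometryEquiv

variable (U : E ≃ₗᵢ[𝕜] E)

/-- `U` restricts to a unitary on `unitaryPart U M` and to a unilateral shift on `shiftPart U M`. -/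
def unitaryPart (M : Submodule 𝕜 E) : Submodule 𝕜 E :=
  ⨅ i : ℕ, M.map ((U : E →ₗ[𝕜] E) ^ i)

def shiftPart (M : Submodule 𝕜 E) : Submodule 𝕜 E :=
  M ⊓ (U.unitaryPart M)ᗮ

variable {U}

theorem mapsTo_orthogonal {K : Submodule 𝕜 E} (hK : MapsTo U.symm K K) : MapsTo U Kᗮ Kᗮ := by
  intro y hy
  refine (K.mem_orthogonal _).2 fun x hx => ?_
  rw [← U.apply_symm_apply x, U.inner_map_map]
  exact (K.mem_orthogonal _).1 hy _ (hK hx)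

theorem mem_map_pow_iff {M : Submodule 𝕜 E} {i : ℕ} {x : E} :
    x ∈ M.map ((U : E →ₗ[𝕜] E) ^ i) ↔ U.symm^[i] x ∈ M := by
  rw [Submodule.mem_map, Module.End.coe_pow]
  constructor
  · rintro ⟨y, hy, rfl⟩
    convert hy using 1
    exact (show Function.LeftInverse U.symm U from U.symm_apply_apply).iterate i y
  · exact fun hx =>
      ⟨_, hx, (show Function.RightInverse U.symm U from U.apply_symm_apply).iterate i x⟩

theorem map_pow_le_of_mapsTo {N : Submodule 𝕜 E} (hN : MapsTo U N N) (i : ℕ) :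
    N.map ((U : E →ₗ[𝕜] E) ^ i) ≤ N := by
  rw [Submodule.map_le_iff_le_comap]
  intro x hx
  simpa [Module.End.coe_pow] using hN.iterate i hx

theorem mem_unitaryPart_iff {M : Submodule 𝕜 E} {x : E} :
    x ∈ U.unitaryPart M ↔ ∀ i, U.symm^[i] x ∈ M := by
  simp only [unitaryPart, Submodule.mem_iInf, mem_map_pow_iff]

theorem unitaryPart_le (M : Submodule 𝕜 E) : U.unitaryPart M ≤ M :=
  fun _ hx => mem_unitaryPart_iff.1 hx 0

theorem le_unitaryPart {M N : Submodule 𝕜 E} (hNM : N ≤ M) (hN : MapsTo U.symm N N) :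
    N ≤ U.unitaryPart M :=
  fun _ hx => mem_unitaryPart_iff.2 fun i => hNM (hN.iterate i hx)

theorem isClosed_unitaryPart {M : Submodule 𝕜 E} (hM : IsClosed (M : Set E)) :
    IsClosed (U.unitaryPart M : Set E) := by
  have hcoe : (U.unitaryPart M : Set E) = ⋂ i : ℕ, U.symm^[i] ⁻¹' M := by
    ext x
    simp [mem_unitaryPart_iff]
  rw [hcoe]
  exact isClosed_iInter fun i => hM.preimage (U.symm.continuous.iterate i)

theorem mapsTo_unitaryPart {M : Submodule 𝕜 E} (hM : MapsTo U M M) :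
    MapsTo U (U.unitaryPart M) (U.unitaryPart M) := by
  intro x hx
  simp only [SetLike.mem_coe, unitaryPart, Submodule.mem_iInf, Submodule.mem_map,
    Module.End.coe_pow] at hx ⊢
  intro i
  obtain ⟨y, hy, rfl⟩ := hx i
  exact ⟨U y, hM hy, Function.Commute.iterate_self _ i y⟩

theorem mapsTo_symm_unitaryPart (M : Submodule 𝕜 E) :
    MapsTo U.symm (U.unitaryPart M) (U.unitaryPart M) := by
  intro x hx
  simp only [SetLike.mem_coe, mem_unitaryPart_iff] at hx ⊢
  intro i
  simpa only [Function.iterate_succ_apply] using hx (i + 1)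

theorem isClosed_shiftPart {M : Submodule 𝕜 E} (hM : IsClosed (M : Set E)) :
    IsClosed (U.shiftPart M : Set E) :=
  hM.inter (Submodule.isClosed_orthogonal _)

theorem mapsTo_shiftPart {M : Submodule 𝕜 E} (hM : MapsTo U M M) :
    MapsTo U (U.shiftPart M) (U.shiftPart M) :=
  hM.inter_inter (mapsTo_orthogonal (mapsTo_symm_unitaryPart M))

theorem isOrtho_unitaryPart_shiftPart (M : Submodule 𝕜 E) : U.unitaryPart M ⟂ U.shiftPart M :=
  (Submodule.isOrtho_orthogonal_right _).mono_right inf_le_right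

theorem unitaryPart_sup_shiftPart [CompleteSpace E] {M : Submodule 𝕜 E}
    (hM : IsClosed (M : Set E)) : U.unitaryPart M ⊔ U.shiftPart M = M := by
  have : CompleteSpace (U.unitaryPart M) := (isClosed_unitaryPart hM).completeSpace_coe
  rw [shiftPart, inf_comm]
  exact Submodule.sup_orthogonal_inf_of_hasOrthogonalProjection (unitaryPart_le M)

theorem iInf_map_pow_shiftPart (M : Submodule 𝕜 E) :
    ⨅ i : ℕ, (U.shiftPart M).map ((U : E →ₗ[𝕜] E) ^ i) = ⊥ := by
  refine eq_bot_iff.2 <| le_trans ?_ (U.unitaryPart M).inf_orthogonal_eq_bot.le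
  refine le_inf (iInf_mono fun i => Submodule.map_mono inf_le_left) ?_
  calc _ ≤ (U.shiftPart M).map ((U : E →ₗ[𝕜] E) ^ 0) := iInf_le _ 0
    _ ≤ _ := by simp [shiftPart, Module.End.one_eq_id]

theorem unitaryPart_sup_inf_le {N₁ N₂ : Submodule 𝕜 E} (hN₁ : MapsTo U N₁ N₁)
    (hN₂ : MapsTo U N₂ N₂) (hN : Disjoint N₁ N₂) :
    U.unitaryPart (N₁ ⊔ N₂) ⊓ N₂ ≤ ⨅ i : ℕ, N₂.map ((U : E →ₗ[𝕜] E) ^ i) := by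
  refine le_iInf fun i => ?_
  calc U.unitaryPart (N₁ ⊔ N₂) ⊓ N₂ ≤ (N₁ ⊔ N₂.map ((U : E →ₗ[𝕜] E) ^ i)) ⊓ N₂ := by
        refine inf_le_inf_right _ ((iInf_le _ i).trans ?_)
        rw [Submodule.map_sup]
        exact sup_le_sup_right (map_pow_le_of_mapsTo hN₁ i) _
    _ = N₂.map ((U : E →ₗ[𝕜] E) ^ i) := by
        rw [sup_comm, sup_inf_assoc_of_le _ (map_pow_le_of_mapsTo hN₂ i), hN.eq_bot, sup_bot_eq]

theorem unitaryPart_sup_eq {N₁ N₂ : Submodule 𝕜 E} (hN₁ : MapsTo U N₁ N₁)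
    (hN₁' : MapsTo U.symm N₁ N₁) (hN₂ : MapsTo U N₂ N₂) (hN : Disjoint N₁ N₂)
    (hN₂' : ⨅ i : ℕ, N₂.map ((U : E →ₗ[𝕜] E) ^ i) = ⊥) :
    U.unitaryPart (N₁ ⊔ N₂) = N₁ := by
  have hle : N₁ ≤ U.unitaryPart (N₁ ⊔ N₂) := le_unitaryPart le_sup_left hN₁'
  refine le_antisymm ?_ hle
  calc U.unitaryPart (N₁ ⊔ N₂) = U.unitaryPart (N₁ ⊔ N₂) ⊓ N₂ ⊔ N₁ := by
        rw [inf_sup_assoc_of_le _ hle, sup_comm, inf_eq_left.2 (unitaryPart_le _)]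
    _ ≤ N₁ := by
        rw [eq_bot_iff.2 ((unitaryPart_sup_inf_le hN₁ hN₂ hN).trans hN₂'.le), bot_sup_eq]

theorem existsUnique_wold_decomposition [CompleteSpace E] {M : Submodule 𝕜 E}
    (hM : IsClosed (M : Set E)) (hUM : MapsTo U M M) :
    ∃! N : Submodule 𝕜 E × Submodule 𝕜 E,
      IsClosed (N.1 : Set E) ∧ IsClosed (N.2 : Set E) ∧ MapsTo U N.1 N.1 ∧
      MapsTo U.symm N.1 N.1 ∧ MapsTo U N.2 N.2 ∧ N.1 ⟂ N.2 ∧ M = N.1 ⊔ N.2 ∧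
      ⨅ i : ℕ, N.2.map ((U : E →ₗ[𝕜] E) ^ i) = ⊥ := by
  refine ⟨(U.unitaryPart M, U.shiftPart M), ⟨isClosed_unitaryPart hM, isClosed_shiftPart hM,
    mapsTo_unitaryPart hUM, mapsTo_symm_unitaryPart M, mapsTo_shiftPart hUM,
    isOrtho_unitaryPart_shiftPart M, (unitaryPart_sup_shiftPart hM).symm,
    iInf_map_pow_shiftPart M⟩, ?_⟩
  rintro ⟨N₁, N₂⟩ ⟨-, -, hN₁, hN₁', hN₂, hN, rfl, hN₂'⟩
  have hunitary : U.unitaryPart (N₁ ⊔ N₂) = N₁ :=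
    unitaryPart_sup_eq hN₁ hN₁' hN₂ hN.disjoint hN₂'
  rw [shiftPart, hunitary, hN.sup_inf_orthogonal]

end LinearIsometryEquiv

end InnerProductSpace

namespace MeasureTheory

section NormedField

variable {α 𝕜 E : Type*} [MeasurableSpace α] {μ : Measure α} [NormedField 𝕜]
  [NormedAddCommGroup E] [NormedSpace 𝕜 E] {p : ℝ≥0∞} {c d : α → 𝕜}

theorem MemLp.smul_of_norm_eq_one (hc : AEStronglyMeasurable c μ) (hc1 : ∀ x, ‖c x‖ = 1)
    {f : α → E} (hf : MemLp f p μ) : MemLp (fun x => c x • f x) p μ :=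
  hf.of_le (hc.smul hf.1) (ae_of_all _ fun x => by rw [norm_smul, hc1, one_mul])

namespace Lp

variable [Fact (1 ≤ p)]

def smulUnimodular (hc : AEStronglyMeasurable c μ) (hc1 : ∀ x, ‖c x‖ = 1) :
    Lp E p μ →ₗᵢ[𝕜] Lp E p μ where
  toFun f := ((Lp.memLp f).smul_of_norm_eq_one hc hc1).toLp _
  map_add' f g := by
    rw [← MemLp.toLp_add]
    refine MemLp.toLp_congr _ _ ?_
    filter_upwards [Lp.coeFn_add f g] with x hx
    rw [hx, Pi.add_apply, smul_add, Pi.add_apply]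
  map_smul' a f := by
    rw [RingHom.id_apply, ← MemLp.toLp_const_smul]
    refine MemLp.toLp_congr _ _ ?_
    filter_upwards [Lp.coeFn_smul a f] with x hx
    rw [hx, Pi.smul_apply, Pi.smul_apply, smul_comm]
  norm_map' f := by
    rw [LinearMap.coe_mk, AddHom.coe_mk, Lp.norm_toLp, Lp.norm_def]
    exact congrArg _ (eLpNorm_congr_norm_ae (ae_of_all _ fun x => by
      rw [norm_smul, hc1, one_mul]))

theorem coeFn_smulUnimodular (hc : AEStronglyMeasurable c μ) (hc1 : ∀ x, ‖c x‖ = 1)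
    (f : Lp E p μ) : smulUnimodular hc hc1 f =ᵐ[μ] fun x => c x • f x :=
  MemLp.coeFn_toLp ((Lp.memLp f).smul_of_norm_eq_one hc hc1)

theorem smulUnimodular_smulUnimodular_of_mul_eq_one (hc : AEStronglyMeasurable c μ)
    (hc1 : ∀ x, ‖c x‖ = 1) (hd : AEStronglyMeasurable d μ) (hd1 : ∀ x, ‖d x‖ = 1)
    (hdc : ∀ x, d x * c x = 1) (f : Lp E p μ) :
    smulUnimodular hd hd1 (smulUnimodular hc hc1 f) = f := by
  refine Lp.ext ?_
  filter_upwards [coeFn_smulUnimodular hd hd1 (smulUnimodular hc hc1 f),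
    coeFn_smulUnimodular hc hc1 f] with x h h'
  rw [h, h', smul_smul, hdc, one_smul]

end Lp

end NormedField

namespace Lp

variable {α 𝕜 E : Type*} [MeasurableSpace α] {μ : Measure α} [RCLike 𝕜]
  [NormedAddCommGroup E] [NormedSpace 𝕜 E] {p : ℝ≥0∞} [Fact (1 ≤ p)] {c : α → 𝕜}

def smulUnimodularEquiv (hc : AEStronglyMeasurable c μ) (hc1 : ∀ x, ‖c x‖ = 1) :
    Lp E p μ ≃ₗᵢ[𝕜] Lp E p μ where
  __ := smulUnimodular hc hc1
  invFun := smulUnimodular (RCLike.continuous_conj.comp_aestronglyMeasurable hc)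
    (fun x => (RCLike.norm_conj (c x)).trans (hc1 x))
  left_inv := smulUnimodular_smulUnimodular_of_mul_eq_one _ _ _ _
    fun x => RCLike.conj_mul_of_norm_eq_one (hc1 x)
  right_inv := smulUnimodular_smulUnimodular_of_mul_eq_one _ _ _ _
    fun x => by rw [mul_comm]; exact RCLike.conj_mul_of_norm_eq_one (hc1 x)

theorem coeFn_smulUnimodularEquiv (hc : AEStronglyMeasurable c μ) (hc1 : ∀ x, ‖c x‖ = 1)
    (f : Lp E p μ) : smulUnimodularEquiv hc hc1 f =ᵐ[μ] fun x => c x • f x :=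
  coeFn_smulUnimodular hc hc1 f

theorem coeFn_smulUnimodularEquiv_symm (hc : AEStronglyMeasurable c μ) (hc1 : ∀ x, ‖c x‖ = 1)
    (f : Lp E p μ) : (smulUnimodularEquiv hc hc1).symm f =ᵐ[μ] fun x => conj (c x) • f x :=
  coeFn_smulUnimodular (RCLike.continuous_conj.comp_aestronglyMeasurable hc)
    (fun x => (RCLike.norm_conj (c x)).trans (hc1 x)) f

end Lp

end MeasureTheory

def shift (n : ℕ) : L2 n ≃ₗᵢ[ℂ] L2 n :=
  Lp.smulUnimodularEquiv (c := fun z : Circle => (z : ℂ)) (by fun_prop) Circle.norm_coe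

section Shift

variable {n : ℕ}

theorem coeFn_shift (f : L2 n) : shift n f =ᵐ[μc] fun z => (z : ℂ) • f z :=
  Lp.coeFn_smulUnimodularEquiv _ _ f

theorem coeFn_shift_symm (f : L2 n) : (shift n).symm f =ᵐ[μc] fun z => conj (z : ℂ) • f z :=
  Lp.coeFn_smulUnimodularEquiv_symm _ _ f

theorem coeFn_shift_iterate (i : ℕ) (f : L2 n) :
    (shift n)^[i] f =ᵐ[μc] fun z => (z : ℂ) ^ i • f z := by
  induction i with
  | zero => exact .of_eq (by simp)
  | succ i ih =>
    rw [Function.iterate_succ_apply']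
    filter_upwards [coeFn_shift ((shift n)^[i] f), ih] with z h h'
    rw [h, h', smul_smul, pow_succ']

theorem shiftInv_iff {S : Set (L2 n)} : ShiftInv S ↔ MapsTo (shift n) S S := by
  refine ⟨fun h f hf => ?_, fun h f hf => ⟨shift n f, h hf, coeFn_shift f⟩⟩
  obtain ⟨g, hg, hgf⟩ := h f hf
  rwa [Lp.ext ((coeFn_shift f).trans hgf.symm)]

theorem shiftStarInv_iff {S : Set (L2 n)} : ShiftStarInv S ↔ MapsTo (shift n).symm S S := by
  refine ⟨fun h f hf => ?_, fun h f hf => ⟨(shift n).symm f, h hf, coeFn_shift_symm f⟩⟩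
  obtain ⟨g, hg, hgf⟩ := h f hf
  rwa [Lp.ext ((coeFn_shift_symm f).trans hgf.symm)]

theorem shiftPow_eq_image (i : ℕ) (S : Set (L2 n)) : shiftPow i S = (shift n)^[i] '' S := by
  ext g
  refine ⟨fun ⟨f, hf, hgf⟩ => ⟨f, hf, Lp.ext ((coeFn_shift_iterate i f).trans hgf.symm)⟩, ?_⟩
  rintro ⟨f, hf, rfl⟩
  exact ⟨f, hf, coeFn_shift_iterate i f⟩

theorem iInter_shiftPow (N : Submodule ℂ (L2 n)) :
    ⋂ i : ℕ, shiftPow i (N : Set (L2 n)) =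
      ↑(⨅ i : ℕ, N.map ((shift n : L2 n →ₗ[ℂ] L2 n) ^ i)) := by
  simp only [shiftPow_eq_image, Submodule.coe_iInf, Submodule.map_coe, Module.End.coe_pow]
  rfl

end Shift

theorem wold_decomposition_general {n : ℕ} (M : Submodule ℂ (L2 n))
    (hMc : IsClosed (M : Set (L2 n))) (hMinv : ShiftInv (M : Set (L2 n))) :
    ∃! MM : Submodule ℂ (L2 n) × Submodule ℂ (L2 n),
      IsClosed (MM.1 : Set (L2 n)) ∧ IsClosed (MM.2 : Set (L2 n)) ∧
      ShiftInv (MM.1 : Set (L2 n)) ∧ ShiftStarInv (MM.1 : Set (L2 n)) ∧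
      ShiftInv (MM.2 : Set (L2 n)) ∧
      (∀ x ∈ MM.1, ∀ y ∈ MM.2, (inner ℂ x y : ℂ) = 0) ∧
      ((M : Set (L2 n)) = {v | ∃ x ∈ MM.1, ∃ y ∈ MM.2, v = x + y}) ∧
      (⋂ i : ℕ, shiftPow i (MM.2 : Set (L2 n))) = {0} := by
  refine (existsUnique_congr fun N => ?_).1
    ((shift n).existsUnique_wold_decomposition hMc (shiftInv_iff.1 hMinv))
  rw [shiftInv_iff, shiftStarInv_iff, shiftInv_iff, Submodule.isOrtho_iff_inner_eq,
    ← Submodule.coe_sup_eq_setOf, SetLike.coe_set_eq, iInter_shiftPow,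
    ← Submodule.bot_coe (R := ℂ), SetLike.coe_set_eq]

/-- **Wold decomposition.** Every closed subspace `M` of `L²(𝕋, ℂⁿ)` invariant under the
bilateral shift `U` has a unique decomposition `M = M₁ ⊕ M₂` (orthogonal direct sum) with
`M₁` a closed reducing subspace for `U` (`U M₁ ⊆ M₁` and `U* M₁ ⊆ M₁`), `M₂` a closed
invariant subspace of `U`, and `⋂_{i ∈ ℕ} Uⁱ M₂ = {0}`. -/
theorem wold_decomposition {n : ℕ} (hn : 0 < n) (M : Submodule ℂ (L2 n))
    (hMc : IsClosed (M : Set (L2 n))) (hMinv : ShiftInv (M : Set (L2 n))) :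
    ∃! MM : Submodule ℂ (L2 n) × Submodule ℂ (L2 n),
      IsClosed (MM.1 : Set (L2 n)) ∧ IsClosed (MM.2 : Set (L2 n)) ∧
      ShiftInv (MM.1 : Set (L2 n)) ∧ ShiftStarInv (MM.1 : Set (L2 n)) ∧
      ShiftInv (MM.2 : Set (L2 n)) ∧
      (∀ x ∈ MM.1, ∀ y ∈ MM.2, (inner ℂ x y : ℂ) = 0) ∧
      ((M : Set (L2 n)) = {v | ∃ x ∈ MM.1, ∃ y ∈ MM.2, v = x + y}) ∧
      (⋂ i : ℕ, shiftPow i (MM.2 : Set (L2 n))) = {0} :=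
  wold_decomposition_general M hMc hMinv
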